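/- arXiv:1812.04733 — 5 statements merged into one kernel-verified Lean document; each statement's English description precedes it below -/
import Mathlib

section
/- Let C be a conjugation on a complex Hilbert space H, let T be a C-symmetric bounded operator, and let p(z, w) be a polynomial in two noncommuting variables. Then C · p(T*, T) · C = p̃(T, T*), where p̃ is obtained from p by conjugating each coefficient. Consequently ‖p(T*, T)‖ = ‖p̃(T, T*)‖, i.e., every complex symmetric operator is g-normal. -/
noncomputable section

/-- A conjugation on a complex inner product space: a conjugate-linear involution
satisfying `⟪Cx, Cy⟫ = ⟪y, x⟫`. -/
def IsConjugation {H : Type*} [NormedAddCommGroup H] [InnerProductSpace ℂ H]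
    (C : H → H) : Prop :=
  (∀ x y : H, C (x + y) = C x + C y) ∧
  (∀ (a : ℂ) (x : H), C (a • x) = (starRingEnd ℂ) a • C x) ∧
  (∀ x : H, C (C x) = x) ∧
  (∀ x y : H, (inner ℂ (C x) (C y) : ℂ) = inner ℂ y x)


/-- The product of the word `w` in the two noncommuting letters `z` (↦ `A`, encoded `true`)
and `w` (↦ `B`, encoded `false`). -/
def wordProd {H : Type*} [NormedAddCommGroup H] [InnerProductSpace ℂ H]
    (A B : H →L[ℂ] H) : List Bool → (H →L[ℂ] H)
  | [] => 1
  | b :: rest => (if b then A else B) * wordProd A B rest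

/-! Since `C T C = T*` and `C T* C = T`, conjugating by `C` swaps `T` and `T*` letter by letter
in every word, while conjugate-linearity of `C` conjugates the coefficients. As `C` is an isometric
involution, conjugation by it preserves operator norms. -/

section ConjByInvolution

variable {E : Type*} {C : E → E}

theorem conj_symm_of_involutive {P Q : E → E} (hinv : Function.Involutive C)
    (h : ∀ x, C (P (C x)) = Q x) (x : E) : C (Q (C x)) = P x := by
  rw [← h, hinv, hinv]

theorem ContinuousLinearMap.opNorm_le_of_conj {𝕜 : Type*} [NontriviallyNormedField 𝕜]
    [SeminormedAddCommGroup E] [NormedSpace 𝕜 E] (hnorm : ∀ x, ‖C x‖ = ‖x‖)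
    {P Q : E →L[𝕜] E} (h : ∀ x, C (P (C x)) = Q x) : ‖Q‖ ≤ ‖P‖ :=
  Q.opNorm_le_bound (norm_nonneg P) fun x => calc
    ‖Q x‖ = ‖P (C x)‖ := by rw [← h, hnorm]
    _ ≤ ‖P‖ * ‖C x‖ := P.le_opNorm _
    _ = ‖P‖ * ‖x‖ := by rw [hnorm]

theorem ContinuousLinearMap.opNorm_eq_of_conj {𝕜 : Type*} [NontriviallyNormedField 𝕜]
    [SeminormedAddCommGroup E] [NormedSpace 𝕜 E] (hinv : Function.Involutive C)
    (hnorm : ∀ x, ‖C x‖ = ‖x‖) {P Q : E →L[𝕜] E} (h : ∀ x, C (P (C x)) = Q x) :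
    ‖P‖ = ‖Q‖ :=
  le_antisymm (opNorm_le_of_conj hnorm (conj_symm_of_involutive hinv h))
    (opNorm_le_of_conj hnorm h)

end ConjByInvolution

theorem conj_wordProd {H : Type*} [NormedAddCommGroup H] [InnerProductSpace ℂ H] {C : H → H}
    (hinv : Function.Involutive C) {A B A' B' : H →L[ℂ] H}
    (hA : ∀ x, C (A (C x)) = A' x) (hB : ∀ x, C (B (C x)) = B' x) :
    ∀ (w : List Bool) (x : H), C (wordProd A B w (C x)) = wordProd A' B' w x
  | [], x => hinv x
  | b :: rest, x => by
    have hrest : wordProd A B rest (C x) = C (wordProd A' B' rest x) := by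
      rw [← conj_wordProd hinv hA hB rest x, hinv]
    cases b
    · simp only [wordProd, Bool.false_eq_true, if_false, mul_apply_eq_comp, hrest, hB]
    · simp only [wordProd, if_true, mul_apply_eq_comp, hrest, hA]

namespace IsConjugation

variable {H : Type*} [NormedAddCommGroup H] [InnerProductSpace ℂ H] {C : H → H}

theorem involutive (hC : IsConjugation C) : Function.Involutive C := hC.2.2.1

theorem norm_map (hC : IsConjugation C) (x : H) : ‖C x‖ = ‖x‖ := by
  have hsq : ‖C x‖ ^ 2 = ‖x‖ ^ 2 := by
    rw [← @inner_self_eq_norm_sq ℂ, ← @inner_self_eq_norm_sq ℂ, hC.2.2.2 x x]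
  exact (sq_eq_sq₀ (norm_nonneg _) (norm_nonneg _)).mp hsq

theorem map_sum (hC : IsConjugation C) {ι : Type*} (s : Finset ι) (f : ι → H) :
    C (∑ i ∈ s, f i) = ∑ i ∈ s, C (f i) :=
  _root_.map_sum (AddMonoidHom.mk' C hC.1) f s

theorem conj_sum_smul (hC : IsConjugation C) {ι : Type*} (s : Finset ι) (a : ι → ℂ)
    {P Q : ι → H →L[ℂ] H} (h : ∀ i x, C (P i (C x)) = Q i x) (x : H) :
    C ((∑ i ∈ s, a i • P i) (C x)) = (∑ i ∈ s, (starRingEnd ℂ) (a i) • Q i) x := by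
  simp only [sum_apply, smul_apply, hC.map_sum, hC.2.1, h]

end IsConjugation

theorem stmt_3 {H : Type*} [NormedAddCommGroup H] [InnerProductSpace ℂ H] [CompleteSpace H]
    (C : H → H) (hC : IsConjugation C) (T : H →L[ℂ] H)
    (hT : ∀ x : H, C (T (C x)) = ContinuousLinearMap.adjoint T x)
    (c : List Bool →₀ ℂ) :
    (∀ x : H,
      C ((∑ w ∈ c.support, c w • wordProd (ContinuousLinearMap.adjoint T) T w) (C x)) =
        (∑ w ∈ c.support, (starRingEnd ℂ) (c w) • wordProd T (ContinuousLinearMap.adjoint T) w) x) ∧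
    ‖∑ w ∈ c.support, c w • wordProd (ContinuousLinearMap.adjoint T) T w‖ =
      ‖∑ w ∈ c.support, (starRingEnd ℂ) (c w) • wordProd T (ContinuousLinearMap.adjoint T) w‖ := by
  have hT_adj : ∀ x, C (ContinuousLinearMap.adjoint T (C x)) = T x :=
    conj_symm_of_involutive hC.involutive hT
  have hp : ∀ x, _ := hC.conj_sum_smul c.support c (conj_wordProd hC.involutive hT_adj hT)
  exact ⟨hp, ContinuousLinearMap.opNorm_eq_of_conj hC.involutive hC.norm_map hp⟩
end
end

section
/- Let T be a 2×2 upper-triangular block operator T = [[X, E], [0, CX*C]] on H ⊕ H, where X is a bounded operator on H, C is a conjugation on H, and E is a bounded operator on H with CEC = E*. Then T is complex symmetric with respect to the conjugation J on H ⊕ H given by J(x, y) = (Cy, Cx). -/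
noncomputable section

/-!
A conjugation `C` turns `(x, y) ↦ ⟪C x, y⟫` into a symmetric complex-bilinear form, and
`C A C = A†` holds exactly when `A` is symmetric for this form. For `J (x, y) = (C y, C x)` the
form `⟪J u, T v⟫` of the block operator `T` is
`⟪C u₂, X v₁⟫ + ⟪C v₂, X u₁⟫ + ⟪C u₂, E v₂⟫`: the two `X`-terms are exchanged by swapping `u`
and `v`, and the `E`-term is symmetric because `E` is `C`-symmetric.
-/

open scoped InnerProductSpace

namespace IsConjugation

variable {H : Type*} [NormedAddCommGroup H] [InnerProductSpace ℂ H] {C : H → H}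

theorem inner_apply_left_comm (hC : IsConjugation C) (a b : H) : ⟪C a, b⟫_ℂ = ⟪C b, a⟫_ℂ := by
  simpa only [hC.2.2.1] using hC.2.2.2 a (C b)

theorem conj_apply_eq_adjoint_iff [CompleteSpace H] (hC : IsConjugation C) (A : H →L[ℂ] H) :
    (∀ x, C (A (C x)) = A.adjoint x) ↔ ∀ x y, ⟪C x, A y⟫_ℂ = ⟪C y, A x⟫_ℂ := by
  have hCC := hC.2.2.1
  constructor
  · intro h x y
    calc ⟪C x, A y⟫_ℂ = ⟪A.adjoint (C x), y⟫_ℂ := (A.adjoint_inner_left y (C x)).symm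
      _ = ⟪C (A x), y⟫_ℂ := by rw [← h, hCC]
      _ = ⟪C y, A x⟫_ℂ := hC.inner_apply_left_comm _ _
  · intro h u
    refine ext_inner_right ℂ fun v => ?_
    calc ⟪C (A (C u)), v⟫_ℂ = ⟪C v, A (C u)⟫_ℂ := hC.inner_apply_left_comm _ _
      _ = ⟪u, A v⟫_ℂ := by rw [h, hCC]
      _ = ⟪A.adjoint u, v⟫_ℂ := (A.adjoint_inner_left v u).symm

end IsConjugation

section SwapConj

variable {H : Type*} [NormedAddCommGroup H] [InnerProductSpace ℂ H] {C : H → H}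

def swapConj (C : H → H) (u : WithLp 2 (H × H)) : WithLp 2 (H × H) :=
  WithLp.toLp 2 (C u.snd, C u.fst)

theorem isConjugation_swapConj (hC : IsConjugation C) : IsConjugation (swapConj C) := by
  obtain ⟨hCadd, hCsmul, hCC, hCinner⟩ := hC
  refine ⟨fun x y => ?_, fun a x => ?_, fun x => ?_, fun x y => ?_⟩
  · simp only [swapConj, WithLp.add_fst, WithLp.add_snd, hCadd]; rfl
  · simp only [swapConj, WithLp.smul_fst, WithLp.smul_snd, hCsmul]; rfl
  · simp only [swapConj, WithLp.toLp_fst, WithLp.toLp_snd, hCC]; rfl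
  · simp only [swapConj, WithLp.prod_inner_apply, hCinner]
    exact add_comm _ _

theorem IsConjugation.inner_swapConj_upperTriangular [CompleteSpace H] (hC : IsConjugation C)
    (X E : H →L[ℂ] H) (T : WithLp 2 (H × H) →L[ℂ] WithLp 2 (H × H))
    (hT : ∀ u, T u = WithLp.toLp 2 (X u.fst + E u.snd, C (X.adjoint (C u.snd))))
    (u v : WithLp 2 (H × H)) :
    ⟪swapConj C u, T v⟫_ℂ =
      ⟪C u.snd, X v.fst⟫_ℂ + ⟪C v.snd, X u.fst⟫_ℂ + ⟪C u.snd, E v.snd⟫_ℂ := by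
  have hX : ⟪C u.fst, C (X.adjoint (C v.snd))⟫_ℂ = ⟪C v.snd, X u.fst⟫_ℂ := by
    rw [hC.2.2.2, X.adjoint_inner_left]
  simp only [swapConj, hT, WithLp.prod_inner_apply, inner_add_right, hX]
  ring

end SwapConj

theorem stmt_15 {H : Type*} [NormedAddCommGroup H] [InnerProductSpace ℂ H] [CompleteSpace H]
    (C : H → H) (hC : IsConjugation C)
    (X E : H →L[ℂ] H)
    (hE : ∀ x : H, C (E (C x)) = ContinuousLinearMap.adjoint E x)
    (T : WithLp 2 (H × H) →L[ℂ] WithLp 2 (H × H))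
    (hT : ∀ x y : H,
      T ((WithLp.equiv 2 (H × H)).symm (x, y)) =
        (WithLp.equiv 2 (H × H)).symm
          (X x + E y, C (ContinuousLinearMap.adjoint X (C y))))
    (J : WithLp 2 (H × H) → WithLp 2 (H × H))
    (hJ : ∀ x y : H,
      J ((WithLp.equiv 2 (H × H)).symm (x, y)) = (WithLp.equiv 2 (H × H)).symm (C y, C x)) :
    IsConjugation J ∧ ∀ u, J (T (J u)) = ContinuousLinearMap.adjoint T u := by
  obtain rfl : J = swapConj C := funext fun u => hJ u.fst u.snd
  have hT' := hC.inner_swapConj_upperTriangular X E T fun u => hT u.fst u.snd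
  have hE' := (hC.conj_apply_eq_adjoint_iff E).1 hE
  have hJ' := isConjugation_swapConj hC
  refine ⟨hJ', (hJ'.conj_apply_eq_adjoint_iff T).2 fun u v => ?_⟩
  rw [hT', hT', hE' u.snd v.snd]
  ring
end
end

section
/- Let T = [[X, E], [0, Y]] be an upper-triangular block operator on H ⊕ H where both X and Y are irreducible, X* has no eigenvalues, Y has no eigenvalues, E is injective, and the only bounded operator Z with YZ = ZX is Z = 0. Then T is irreducible: any orthogonal projection on H ⊕ H commuting with T is 0 or I. -/
/-!
Write operators on `H ⊕ H` as `2 × 2` block matrices. If `P` commutes with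
`T = [[X, E], [0, Y]]`, the lower-left entry of `P * T = T * P` says that the lower-left block
of `P` intertwines `X` and `Y`, so it vanishes; as `P` is self-adjoint its upper-right block is
the adjoint of the lower-left one and vanishes too. Hence `P = diag(A, D)` with `A`, `D`
projections commuting with `X`, `Y` respectively, so each is `0` or `1`, and the upper-right
entry `A E = E D` with `E` injective rules out the two mixed cases.
-/

open ContinuousLinearMap WithLp

namespace WithLp

section Block

variable {𝕜 E F : Type*} [NontriviallyNormedField 𝕜] [NormedAddCommGroup E] [NormedSpace 𝕜 E]
  [NormedAddCommGroup F] [NormedSpace 𝕜 F] (p : ENNReal)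

def prodBlock (A : E →L[𝕜] E) (B : F →L[𝕜] E) (C : E →L[𝕜] F) (D : F →L[𝕜] F) :
    WithLp p (E × F) →L[𝕜] WithLp p (E × F) :=
  (prodContinuousLinearEquiv p 𝕜 E F).symm.toContinuousLinearMap ∘L
    ((A.coprod B).prod (C.coprod D)) ∘L (prodContinuousLinearEquiv p 𝕜 E F).toContinuousLinearMap

variable {p}

@[simp]
theorem prodBlock_apply (A : E →L[𝕜] E) (B : F →L[𝕜] E) (C : E →L[𝕜] F) (D : F →L[𝕜] F)
    (x : E) (y : F) :
    prodBlock p A B C D (toLp p (x, y)) = toLp p (A x + B y, C x + D y) := rfl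

theorem ext_continuousLinearMap_prod {S T : WithLp p (E × F) →L[𝕜] WithLp p (E × F)}
    (h : ∀ x y, S (toLp p (x, y)) = T (toLp p (x, y))) : S = T :=
  ContinuousLinearMap.ext fun u => h u.ofLp.1 u.ofLp.2

theorem exists_eq_prodBlock (P : WithLp p (E × F) →L[𝕜] WithLp p (E × F)) :
    ∃ A B C D, P = prodBlock p A B C D := by
  let J := (prodContinuousLinearEquiv p 𝕜 E F).symm.toContinuousLinearMap
  refine ⟨fstL p 𝕜 E F ∘L P ∘L J ∘L inl 𝕜 E F, fstL p 𝕜 E F ∘L P ∘L J ∘L inr 𝕜 E F,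
    sndL p 𝕜 E F ∘L P ∘L J ∘L inl 𝕜 E F, sndL p 𝕜 E F ∘L P ∘L J ∘L inr 𝕜 E F, ?_⟩
  refine ext_continuousLinearMap_prod fun x y => ?_
  have : toLp p (x, y) = toLp p (x, 0) + toLp p (0, y) := by simp [← toLp_add]
  rw [prodBlock_apply, this, map_add]
  simp only [WithLp.ext_iff, ofLp_add]
  rfl

theorem prodBlock_inj {A A' : E →L[𝕜] E} {B B' : F →L[𝕜] E} {C C' : E →L[𝕜] F}
    {D D' : F →L[𝕜] F} :
    prodBlock p A B C D = prodBlock p A' B' C' D' ↔ A = A' ∧ B = B' ∧ C = C' ∧ D = D' := by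
  refine ⟨fun h => ?_, by rintro ⟨rfl, rfl, rfl, rfl⟩; rfl⟩
  have hl x := congr(ofLp ($h (toLp p (x, 0))))
  have hr y := congr(ofLp ($h (toLp p (0, y))))
  simp only [prodBlock_apply, map_zero, add_zero, zero_add, ofLp_toLp, Prod.mk.injEq] at hl hr
  exact ⟨ext fun x => (hl x).1, ext fun y => (hr y).1, ext fun x => (hl x).2,
    ext fun y => (hr y).2⟩

theorem prodBlock_mul_prodBlock (A A' : E →L[𝕜] E) (B B' : F →L[𝕜] E) (C C' : E →L[𝕜] F)
    (D D' : F →L[𝕜] F) :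
    prodBlock p A B C D * prodBlock p A' B' C' D' =
      prodBlock p (A ∘L A' + B ∘L C') (A ∘L B' + B ∘L D') (C ∘L A' + D ∘L C')
        (C ∘L B' + D ∘L D') :=
  ext_continuousLinearMap_prod fun x y => by
    simp only [mul_apply_eq_comp, prodBlock_apply, map_add, add_apply, comp_apply]
    congr 2 <;> abel

@[simp]
theorem prodBlock_zero : prodBlock p (0 : E →L[𝕜] E) (0 : F →L[𝕜] E) 0 0 = 0 :=
  ext_continuousLinearMap_prod fun x y => by simp

@[simp]
theorem prodBlock_one : prodBlock p (1 : E →L[𝕜] E) (0 : F →L[𝕜] E) 0 1 = 1 :=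
  ext_continuousLinearMap_prod fun x y => by simp

theorem isIdempotentElem_prodBlock_diag_iff {A : E →L[𝕜] E} {D : F →L[𝕜] F} :
    IsIdempotentElem (prodBlock p A 0 0 D) ↔ IsIdempotentElem A ∧ IsIdempotentElem D := by
  simp only [IsIdempotentElem, prodBlock_mul_prodBlock, prodBlock_inj]
  simp [mul_def]

theorem prodBlock_diag_commute_upperTriangular_iff {A X : E →L[𝕜] E} {D Y : F →L[𝕜] F}
    {K : F →L[𝕜] E} :
    prodBlock p A 0 0 D * prodBlock p X K 0 Y = prodBlock p X K 0 Y * prodBlock p A 0 0 D ↔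
      A * X = X * A ∧ A ∘L K = K ∘L D ∧ D * Y = Y * D := by
  simp only [prodBlock_mul_prodBlock, prodBlock_inj]
  simp [mul_def]

theorem prodBlock_diag_eq_zero_or_eq_one {A : E →L[𝕜] E} {D : F →L[𝕜] F} {K : F →L[𝕜] E}
    (hK : Function.Injective K) (hA : A = 0 ∨ A = 1) (hD : D = 0 ∨ D = 1)
    (hAKD : A ∘L K = K ∘L D) :
    prodBlock p A 0 0 D = 0 ∨ prodBlock p A 0 0 D = 1 := by
  rcases hA with rfl | rfl <;> rcases hD with rfl | rfl
  · simp
  -- in the mixed cases `K = 0` is injective, so `F` is trivial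
  · obtain rfl : K = 0 := by simpa [one_def] using hAKD.symm
    have : Subsingleton F := ⟨fun y y' => hK (by simp)⟩
    simp [Subsingleton.elim (1 : F →L[𝕜] F) 0]
  · obtain rfl : K = 0 := by simpa [one_def] using hAKD
    have : Subsingleton F := ⟨fun y y' => hK (by simp)⟩
    simp [Subsingleton.elim (0 : F →L[𝕜] F) 1]
  · simp

end Block

section Adjoint

variable {𝕜 E F : Type*} [RCLike 𝕜] [NormedAddCommGroup E] [InnerProductSpace 𝕜 E]
  [NormedAddCommGroup F] [InnerProductSpace 𝕜 F] [CompleteSpace E] [CompleteSpace F]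

theorem adjoint_prodBlock (A : E →L[𝕜] E) (B : F →L[𝕜] E) (C : E →L[𝕜] F) (D : F →L[𝕜] F) :
    adjoint (prodBlock 2 A B C D) =
      prodBlock 2 (adjoint A) (adjoint C) (adjoint B) (adjoint D) := by
  symm
  rw [eq_adjoint_iff]
  intro u v
  simp [prodBlock, inner_add_left, inner_add_right, adjoint_inner_left]
  ring

theorem isSelfAdjoint_prodBlock_iff {A : E →L[𝕜] E} {B : F →L[𝕜] E} {C : E →L[𝕜] F}
    {D : F →L[𝕜] F} :
    IsSelfAdjoint (prodBlock 2 A B C D) ↔ IsSelfAdjoint A ∧ B = adjoint C ∧ IsSelfAdjoint D := by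
  simp only [isSelfAdjoint_iff', adjoint_prodBlock, prodBlock_inj]
  constructor
  · rintro ⟨hA, hCB, -, hD⟩; exact ⟨hA, hCB.symm, hD⟩
  · rintro ⟨hA, rfl, hD⟩; exact ⟨hA, rfl, adjoint_adjoint C, hD⟩

theorem isSelfAdjoint_prodBlock_diag_iff {A : E →L[𝕜] E} {D : F →L[𝕜] F} :
    IsSelfAdjoint (prodBlock 2 A 0 0 D) ↔ IsSelfAdjoint A ∧ IsSelfAdjoint D := by
  simp [isSelfAdjoint_prodBlock_iff]

theorem exists_eq_prodBlock_diag_of_commute_upperTriangular {X : E →L[𝕜] E} {Y : F →L[𝕜] F}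
    {K : F →L[𝕜] E} (hXY : ∀ Z : E →L[𝕜] F, Y ∘L Z = Z ∘L X → Z = 0)
    {P : WithLp 2 (E × F) →L[𝕜] WithLp 2 (E × F)} (hPsa : IsSelfAdjoint P)
    (hPT : P * prodBlock 2 X K 0 Y = prodBlock 2 X K 0 Y * P) :
    ∃ A D, P = prodBlock 2 A 0 0 D := by
  obtain ⟨A, B, C, D, rfl⟩ := exists_eq_prodBlock P
  simp only [prodBlock_mul_prodBlock, prodBlock_inj, comp_zero, zero_comp, add_zero, zero_add]
    at hPT
  obtain ⟨-, -, hCX, -⟩ := hPT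
  have hC : C = 0 := hXY C hCX.symm
  have hB : B = 0 := by simpa [hC] using (isSelfAdjoint_prodBlock_iff.mp hPsa).2.1
  exact ⟨A, D, by rw [hB, hC]⟩

end Adjoint

end WithLp

theorem stmt_16_general {H : Type*} [NormedAddCommGroup H] [InnerProductSpace ℂ H] [CompleteSpace H]
    (X Y E : H →L[ℂ] H)
    (hXirr : ∀ P : H →L[ℂ] H, IsIdempotentElem P → IsSelfAdjoint P →
      P * X = X * P → P = 0 ∨ P = 1)
    (hYirr : ∀ P : H →L[ℂ] H, IsIdempotentElem P → IsSelfAdjoint P →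
      P * Y = Y * P → P = 0 ∨ P = 1)
    (hEinj : Function.Injective ⇑E)
    (hros : ∀ Z : H →L[ℂ] H, Y * Z = Z * X → Z = 0)
    (T : WithLp 2 (H × H) →L[ℂ] WithLp 2 (H × H))
    (hT : ∀ x y : H,
      T ((WithLp.equiv 2 (H × H)).symm (x, y)) =
        (WithLp.equiv 2 (H × H)).symm (X x + E y, Y y)) :
    ∀ P : WithLp 2 (H × H) →L[ℂ] WithLp 2 (H × H),
      IsIdempotentElem P → IsSelfAdjoint P → P * T = T * P → P = 0 ∨ P = 1 := by
  intro P hP hPsa hPT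
  obtain rfl : T = prodBlock 2 X E 0 Y :=
    ext_continuousLinearMap_prod fun x y => by simpa using hT x y
  obtain ⟨A, D, rfl⟩ := exists_eq_prodBlock_diag_of_commute_upperTriangular hros hPsa hPT
  rw [isIdempotentElem_prodBlock_diag_iff] at hP
  rw [isSelfAdjoint_prodBlock_diag_iff] at hPsa
  obtain ⟨hAX, hAE, hDY⟩ := prodBlock_diag_commute_upperTriangular_iff.mp hPT
  exact prodBlock_diag_eq_zero_or_eq_one hEinj (hXirr A hP.1 hPsa.1 hAX)
    (hYirr D hP.2 hPsa.2 hDY) hAE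

theorem stmt_16 {H : Type*} [NormedAddCommGroup H] [InnerProductSpace ℂ H] [CompleteSpace H]
    (X Y E : H →L[ℂ] H)
    (hXirr : ∀ P : H →L[ℂ] H, IsIdempotentElem P → IsSelfAdjoint P →
      P * X = X * P → P = 0 ∨ P = 1)
    (hYirr : ∀ P : H →L[ℂ] H, IsIdempotentElem P → IsSelfAdjoint P →
      P * Y = Y * P → P = 0 ∨ P = 1)
    (hXadj : ∀ (lam : ℂ) (x : H), ContinuousLinearMap.adjoint X x = lam • x → x = 0)
    (hYeig : ∀ (lam : ℂ) (x : H), Y x = lam • x → x = 0)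
    (hEinj : Function.Injective ⇑E)
    (hros : ∀ Z : H →L[ℂ] H, Y * Z = Z * X → Z = 0)
    (T : WithLp 2 (H × H) →L[ℂ] WithLp 2 (H × H))
    (hT : ∀ x y : H,
      T ((WithLp.equiv 2 (H × H)).symm (x, y)) =
        (WithLp.equiv 2 (H × H)).symm (X x + E y, Y y)) :
    ∀ P : WithLp 2 (H × H) →L[ℂ] WithLp 2 (H × H),
      IsIdempotentElem P → IsSelfAdjoint P → P * T = T * P → P = 0 ∨ P = 1 :=
  stmt_16_general X Y E hXirr hYirr hEinj hros T hT
end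

section
/- Let T be a bounded operator on a complex Hilbert space and suppose T is C-symmetric for some conjugation C. If λ ∉ σ_lre(T) (i.e., T − λ is semi-Fredholm), then T − λ is Fredholm of index 0. Consequently σ_e(T) = σ_lre(T) for every complex symmetric operator T. -/
/-!
The conjugation `C` maps `ker (T - λ)` conjugate-linearly and bijectively onto
`ker (T - λ)*`, because `C (T - λ) C = (T - λ)*`. A conjugate-linear bijection preserves
complex dimension, so the two kernels are finite-dimensional together and of equal dimension:
a semi-Fredholm `T - λ` is therefore Fredholm of index zero.
-/

noncomputable section

open ContinuousLinearMap

namespace IsConjugation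

variable {H : Type*} [NormedAddCommGroup H] [InnerProductSpace ℂ H] {C : H → H}

theorem map_add (hC : IsConjugation C) (x y : H) : C (x + y) = C x + C y := hC.1 x y

theorem map_smul (hC : IsConjugation C) (a : ℂ) (x : H) : C (a • x) = starRingEnd ℂ a • C x :=
  hC.2.1 a x

theorem apply_apply (hC : IsConjugation C) (x : H) : C (C x) = x := hC.2.2.1 x

theorem map_zero (hC : IsConjugation C) : C 0 = 0 := by
  simpa using hC.map_smul 0 0

theorem map_sub (hC : IsConjugation C) (x y : H) : C (x - y) = C x - C y := by
  have hneg : C (-y) = -C y := by simpa using hC.map_smul (-1) y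
  rw [sub_eq_add_neg, hC.map_add, hneg, sub_eq_add_neg]

variable [CompleteSpace H]

def kerAddEquiv (hC : IsConjugation C) {A : H →L[ℂ] H} (hA : ∀ x, C (A (C x)) = adjoint A x) :
    LinearMap.ker (A : H →ₗ[ℂ] H) ≃+ LinearMap.ker (adjoint A : H →ₗ[ℂ] H) where
  toFun x := ⟨C x, by
    have hx : A x = 0 := x.2
    change adjoint A (C x) = 0
    rw [← hA, hC.apply_apply, hx, hC.map_zero]⟩
  invFun y := ⟨C y, by
    have hy : adjoint A y = 0 := y.2
    change A (C y) = 0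
    rw [← hC.apply_apply (A (C y)), hA, hy, hC.map_zero]⟩
  left_inv x := Subtype.ext (hC.apply_apply x)
  right_inv y := Subtype.ext (hC.apply_apply y)
  map_add' x y := Subtype.ext (hC.map_add x y)

theorem rank_ker_eq_rank_ker_adjoint (hC : IsConjugation C) {A : H →L[ℂ] H}
    (hA : ∀ x, C (A (C x)) = adjoint A x) :
    Module.rank ℂ (LinearMap.ker (A : H →ₗ[ℂ] H)) =
      Module.rank ℂ (LinearMap.ker (adjoint A : H →ₗ[ℂ] H)) :=
  rank_eq_of_equiv_equiv (starRingEnd ℂ) (hC.kerAddEquiv hA)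
    star_involutive.bijective
    (fun a x => Subtype.ext (hC.map_smul a x))

theorem finiteDimensional_ker_iff (hC : IsConjugation C) {A : H →L[ℂ] H}
    (hA : ∀ x, C (A (C x)) = adjoint A x) :
    FiniteDimensional ℂ (LinearMap.ker (A : H →ₗ[ℂ] H)) ↔
      FiniteDimensional ℂ (LinearMap.ker (adjoint A : H →ₗ[ℂ] H)) := by
  simp only [FiniteDimensional, ← Module.rank_lt_aleph0_iff,
    hC.rank_ker_eq_rank_ker_adjoint hA]

theorem finrank_ker_eq (hC : IsConjugation C) {A : H →L[ℂ] H}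
    (hA : ∀ x, C (A (C x)) = adjoint A x) :
    Module.finrank ℂ (LinearMap.ker (A : H →ₗ[ℂ] H)) =
      Module.finrank ℂ (LinearMap.ker (adjoint A : H →ₗ[ℂ] H)) :=
  congrArg Cardinal.toNat (hC.rank_ker_eq_rank_ker_adjoint hA)

theorem conj_sub_smul_one (hC : IsConjugation C) {T : H →L[ℂ] H}
    (hT : ∀ x, C (T (C x)) = adjoint T x) (lam : ℂ) (x : H) :
    C ((T - lam • 1) (C x)) = adjoint (T - lam • (1 : H →L[ℂ] H)) x := by
  simp [hC.map_sub, hC.map_smul, hC.apply_apply, hT, one_def, map_smulₛₗ, adjoint_id]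

end IsConjugation

theorem stmt_17 {H : Type*} [NormedAddCommGroup H] [InnerProductSpace ℂ H] [CompleteSpace H]
    (C : H → H) (hC : IsConjugation C) (T : H →L[ℂ] H)
    (hT : ∀ x : H, C (T (C x)) = ContinuousLinearMap.adjoint T x) :
    (∀ lam : ℂ,
      (IsClosed (Set.range (T - lam • (1 : H →L[ℂ] H))) ∧
        (FiniteDimensional ℂ (LinearMap.ker ((T - lam • (1 : H →L[ℂ] H) : H →L[ℂ] H) : H →ₗ[ℂ] H)) ∨
          FiniteDimensional ℂ (LinearMap.ker ((ContinuousLinearMap.adjoint (T - lam • (1 : H →L[ℂ] H)) : H →L[ℂ] H) : H →ₗ[ℂ] H)))) →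
      FiniteDimensional ℂ (LinearMap.ker ((T - lam • (1 : H →L[ℂ] H) : H →L[ℂ] H) : H →ₗ[ℂ] H)) ∧
      FiniteDimensional ℂ (LinearMap.ker ((ContinuousLinearMap.adjoint (T - lam • (1 : H →L[ℂ] H)) : H →L[ℂ] H) : H →ₗ[ℂ] H)) ∧
      Module.finrank ℂ (LinearMap.ker ((T - lam • (1 : H →L[ℂ] H) : H →L[ℂ] H) : H →ₗ[ℂ] H)) =
        Module.finrank ℂ (LinearMap.ker ((ContinuousLinearMap.adjoint (T - lam • (1 : H →L[ℂ] H)) : H →L[ℂ] H) : H →ₗ[ℂ] H))) ∧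
    {lam : ℂ | ¬ (IsClosed (Set.range (T - lam • (1 : H →L[ℂ] H))) ∧
        FiniteDimensional ℂ (LinearMap.ker ((T - lam • (1 : H →L[ℂ] H) : H →L[ℂ] H) : H →ₗ[ℂ] H)) ∧
        FiniteDimensional ℂ (LinearMap.ker ((ContinuousLinearMap.adjoint (T - lam • (1 : H →L[ℂ] H)) : H →L[ℂ] H) : H →ₗ[ℂ] H)))} =
      {lam : ℂ | ¬ (IsClosed (Set.range (T - lam • (1 : H →L[ℂ] H))) ∧
        (FiniteDimensional ℂ (LinearMap.ker ((T - lam • (1 : H →L[ℂ] H) : H →L[ℂ] H) : H →ₗ[ℂ] H)) ∨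
          FiniteDimensional ℂ (LinearMap.ker ((ContinuousLinearMap.adjoint (T - lam • (1 : H →L[ℂ] H)) : H →L[ℂ] H) : H →ₗ[ℂ] H))))} := by
  have hA (lam : ℂ) := hC.conj_sub_smul_one hT lam
  refine ⟨fun lam ⟨_, hfin⟩ => ?_, ?_⟩
  · have hiff := hC.finiteDimensional_ker_iff (hA lam)
    exact ⟨hfin.elim id hiff.mpr, hfin.elim hiff.mp id, hC.finrank_ker_eq (hA lam)⟩
  · ext lam
    simp only [Set.mem_ofPred_eq, hC.finiteDimensional_ker_iff (hA lam), and_self, or_self]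
end
end

section
/- Let A be a bounded operator on a complex Hilbert space K such that the C*-algebra generated by A and the identity contains no nonzero compact operator, and let B = A^(∞) be the direct sum of countably infinitely many copies of A. If B − λ is Fredholm of index 0 for some λ ∈ ℂ, then A − λ is invertible, and hence B − λ is invertible. Consequently, if R is any operator approximately unitarily equivalent to B, then σ(R) = σ_e(R). -/
/-!
If `A - λ` is not invertible, either it has unit vectors `x` with `‖(A - λ) x‖` arbitrarily
small, or its adjoint kills a unit vector `y`. Placing `x` (resp. `y`) in each coordinate of
`ℓ²(ℕ, K)` gives an orthonormal sequence on which `B - λ` (resp. its adjoint) is uniformly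
small, and unitaries nearly intertwining `B` with `R` carry it to an orthonormal sequence on
which `R - λ` (resp. its adjoint) is small. This is impossible when `R - λ` is Fredholm: an
operator with closed range is bounded below off its kernel (and so is its adjoint), and some
nonzero combination of `dim ker + 1` vectors of an orthonormal sequence is orthogonal to a
finite-dimensional kernel. Taking `R = B` gives the first claim; for the second, invertibility of
`B - λ` passes to `R - λ` because the units form an open set.
-/

open Filter Topology Module ContinuousLinearMap
open scoped InnerProductSpace

section CStarRing

variable {R : Type*} [NormedRing R] [StarRing R] [CStarRing R]

lemma norm_mul_star_sub_star_mul_of_mem_unitary {u : R} (hu : u ∈ unitary R) (a b : R) :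
    ‖u * star b - star a * u‖ = ‖u * b - a * u‖ := by
  have h : u * star b - star a * u = u * star (u * b - a * u) * u := by
    simp only [star_sub, star_mul, mul_sub, sub_mul, ← mul_assoc,
      Unitary.mul_star_self_of_mem hu, one_mul]
    simp only [mul_assoc, Unitary.star_mul_self_of_mem hu, mul_one]
  rw [h, CStarRing.norm_mul_mem_unitary _ hu, CStarRing.norm_mem_unitary_mul _ hu, norm_star]

lemma IsUnit.of_tendsto_norm_mul_sub_mul [CompleteSpace R] {a b : R} {U : ℕ → R}
    (hU : ∀ n, U n ∈ unitary R) (h : Tendsto (fun n ↦ ‖U n * a - b * U n‖) atTop (𝓝 0))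
    (ha : IsUnit a) : IsUnit b := by
  obtain ⟨δ, hδ, hball⟩ := Metric.isOpen_iff.mp Units.isOpen a ha
  obtain ⟨n, hn⟩ := (h.eventually (gt_mem_nhds hδ)).exists
  have hu := hU n
  have hconj : IsUnit (star (U n) * b * U n) := by
    refine hball ?_
    have : star (U n) * b * U n - a = star (U n) * (b * U n - U n * a) := by
      rw [mul_sub, ← mul_assoc, ← mul_assoc, Unitary.star_mul_self_of_mem hu, one_mul]
    rw [Metric.mem_ball, dist_eq_norm, this,
      CStarRing.norm_mem_unitary_mul _ (Unitary.star_mem hu), norm_sub_rev]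
    exact hn
  have hb : b = U n * (star (U n) * b * U n) * star (U n) := by
    simp only [← mul_assoc, Unitary.mul_star_self_of_mem hu, one_mul]
    rw [mul_assoc, Unitary.mul_star_self_of_mem hu, mul_one]
  rw [hb]
  exact ((Unitary.isUnit_coe (U := ⟨U n, hu⟩)).mul hconj).mul
    (Unitary.isUnit_coe (U := ⟨star (U n), Unitary.star_mem hu⟩))

end CStarRing

section Hilbert

variable {E : Type*} [NormedAddCommGroup E] [InnerProductSpace ℂ E]

lemma exists_mem_orthogonal_norm_apply_le (S : E →L[ℂ] E) (p : Submodule ℂ E)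
    [FiniteDimensional ℂ p] {g : ℕ → E} (hg : Orthonormal ℂ g) {ε : ℝ}
    (hSg : ∀ j, ‖S (g j)‖ ≤ ε) :
    ∃ x ∈ pᗮ, x ≠ 0 ∧ ‖S x‖ ≤ (finrank ℂ p + 1) * ε * ‖x‖ := by
  set m := finrank ℂ p
  have hv : Orthonormal ℂ (fun i : Fin (m + 1) ↦ g i) := hg.comp _ Fin.val_injective
  set L := p.orthogonalProjectionOnto.toLinearMap ∘ₗ
    Fintype.linearCombination ℂ (fun i : Fin (m + 1) ↦ g i)
  obtain ⟨d, hd, hd0⟩ := (Submodule.ne_bot_iff _).mp (L.ker_ne_bot_of_finrank_lt (by simp [m]))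
  set x := ∑ i, d i • g i
  have hx : x ∈ pᗮ := Submodule.orthogonalProjectionOnto_eq_zero_iff.mp
    (by simpa only [L, LinearMap.mem_ker, LinearMap.comp_apply, Fintype.linearCombination_apply,
      coe_coe] using hd)
  have hx0 : x ≠ 0 := fun h ↦
    hd0 (funext fun i ↦ Fintype.linearIndependent_iff.mp hv.linearIndependent d h i)
  have hcoef (i : Fin (m + 1)) : ‖d i‖ ≤ ‖x‖ := by
    rw [← hv.inner_right_fintype d i]
    simpa [hv.1 i] using norm_inner_le_norm (𝕜 := ℂ) (g i) x
  refine ⟨x, hx, hx0, ?_⟩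
  calc ‖S x‖ ≤ ∑ i : Fin (m + 1), ‖d i‖ * ‖S (g i)‖ := by
        simp only [x, map_sum, map_smul]
        exact (norm_sum_le _ _).trans_eq (by simp only [norm_smul])
    _ ≤ ∑ _i : Fin (m + 1), ‖x‖ * ε :=
        Finset.sum_le_sum fun i _ ↦ mul_le_mul (hcoef i) (hSg i) (norm_nonneg _) (norm_nonneg _)
    _ = (m + 1) * ε * ‖x‖ := by simp; ring

lemma exists_pos_forall_orthonormal_exists_lt_norm_apply {S : E →L[ℂ] E}
    [FiniteDimensional ℂ S.ker] (hS : ∃ c > 0, ∀ x ∈ S.kerᗮ, c * ‖x‖ ≤ ‖S x‖) :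
    ∃ ε > 0, ∀ g : ℕ → E, Orthonormal ℂ g → ∃ j, ε < ‖S (g j)‖ := by
  obtain ⟨c, hc, hbelow⟩ := hS
  refine ⟨c / (2 * (finrank ℂ S.ker + 1)), by positivity, fun g hg ↦ ?_⟩
  by_contra! hsmall
  obtain ⟨x, hx, hx0, hSx⟩ := exists_mem_orthogonal_norm_apply_le S S.ker hg hsmall
  have hm : ((finrank ℂ S.ker : ℝ) + 1) * (c / (2 * (finrank ℂ S.ker + 1))) = c / 2 := by
    field_simp
  rw [hm] at hSx
  nlinarith [hbelow x hx, norm_pos_iff.mpr hx0]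

variable [CompleteSpace E]

lemma isUnit_of_mul_norm_le_of_ker_adjoint_eq_bot {T : E →L[ℂ] E} {c : ℝ} (hc : 0 < c)
    (hT : ∀ x, c * ‖x‖ ≤ ‖T x‖) (hker : (adjoint T).ker = ⊥) : IsUnit T := by
  obtain ⟨K, hK⟩ := antilipschitzWith_iff_exists_mul_le_norm.mpr ⟨c, hc, hT⟩
  rw [isUnit_iff_bijective, bijective_iff_dense_range_and_antilipschitz]
  refine ⟨?_, K, hK⟩
  rw [Submodule.topologicalClosure_eq_top_iff, orthogonal_range, hker]

lemma exists_norm_apply_le_or_exists_adjoint_apply_eq_zero {T : E →L[ℂ] E} (hT : ¬IsUnit T) :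
    (∀ ε > 0, ∃ x : E, ‖x‖ = 1 ∧ ‖T x‖ ≤ ε) ∨ ∃ y : E, ‖y‖ = 1 ∧ adjoint T y = 0 := by
  by_contra! ⟨⟨ε, hε, hbelow⟩, hker⟩
  refine hT (isUnit_of_mul_norm_le_of_ker_adjoint_eq_bot hε (fun x ↦ ?_)
    ((Submodule.eq_bot_iff _).mpr fun y hy ↦ ?_))
  · rcases eq_or_ne x 0 with rfl | hx
    · simp
    have := hbelow _ (norm_smul_inv_norm (𝕜 := ℂ) hx)
    rw [map_smul, norm_smul, norm_inv, RCLike.norm_ofReal, abs_norm,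
      lt_inv_mul_iff₀ (norm_pos_iff.mpr hx), mul_comm] at this
    exact this.le
  · by_contra hy0
    exact hker _ (norm_smul_inv_norm (𝕜 := ℂ) hy0)
      (by rw [map_smul, show adjoint T y = 0 from hy, smul_zero])

lemma exists_mem_orthogonal_ker_apply_eq (S : E →L[ℂ] E) (w : E) :
    ∃ z ∈ S.kerᗮ, S z = S w := by
  have : CompleteSpace S.ker := S.isClosed_ker.completeSpace_coe
  obtain ⟨y, hy, z, hz, rfl⟩ := S.ker.exists_add_mem_mem_orthogonal w
  exact ⟨z, hz, by simp [show S y = 0 from hy]⟩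

lemma exists_pos_mul_norm_le_of_isClosed_range {S : E →L[ℂ] E} (hS : IsClosed (Set.range S)) :
    ∃ c > 0, ∀ x ∈ S.kerᗮ, c * ‖x‖ ≤ ‖S x‖ := by
  set f := S ∘L S.kerᗮ.subtypeL
  have hinj : Function.Injective f := by
    refine (injective_iff_map_eq_zero f).mpr fun x hx ↦ Subtype.ext ?_
    exact Submodule.inf_orthogonal_eq_bot S.ker |>.le ⟨hx, x.2⟩
  have hrange : Set.range f = Set.range S := by
    refine subset_antisymm (fun _ ⟨x, hx⟩ ↦ ⟨x, hx⟩) ?_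
    rintro _ ⟨w, rfl⟩
    obtain ⟨z, hz, hSz⟩ := exists_mem_orthogonal_ker_apply_eq S w
    exact ⟨⟨z, hz⟩, hSz⟩
  obtain ⟨c, hc, hf⟩ := antilipschitzWith_iff_exists_mul_le_norm.mp
    (f.antilipschitz_of_injective_of_isClosed_range hinj (hrange ▸ hS))
  exact ⟨c, hc, fun x hx ↦ hf ⟨x, hx⟩⟩

lemma exists_pos_mul_norm_le_adjoint_of_isClosed_range {S : E →L[ℂ] E}
    (hS : IsClosed (Set.range S)) : ∃ c > 0, ∀ x ∈ (adjoint S).kerᗮ, c * ‖x‖ ≤ ‖adjoint S x‖ := by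
  obtain ⟨c, hc, hbelow⟩ := exists_pos_mul_norm_le_of_isClosed_range hS
  refine ⟨c, hc, fun x hx ↦ ?_⟩
  have : CompleteSpace S.range :=
    IsClosed.completeSpace_coe (hs := by rwa [LinearMap.coe_range, coe_coe])
  rw [← orthogonal_range, Submodule.orthogonal_orthogonal] at hx
  obtain ⟨w, hw⟩ := hx
  obtain ⟨z, hz, rfl⟩ : ∃ z ∈ S.kerᗮ, S z = x := hw ▸ exists_mem_orthogonal_ker_apply_eq S w
  rcases eq_or_ne (S z) 0 with hx0 | hx0
  · simp [hx0]
  have key : ‖S z‖ * ‖S z‖ ≤ ‖adjoint S (S z)‖ * ‖z‖ := by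
    rw [← inner_self_eq_norm_mul_norm (𝕜 := ℂ), ← adjoint_inner_left]
    exact re_inner_le_norm _ _
  refine le_of_mul_le_mul_right ?_ (norm_pos_iff.mpr hx0)
  calc c * ‖S z‖ * ‖S z‖ ≤ ‖adjoint S (S z)‖ * (c * ‖z‖) := by nlinarith
    _ ≤ ‖adjoint S (S z)‖ * ‖S z‖ := by gcongr; exact hbelow z hz

lemma exists_lt_norm_sub_add_norm_apply_of_mem_unitary {S V u : E →L[ℂ] E}
    (hu : u ∈ unitary (E →L[ℂ] E)) {ε : ℝ}
    (hS : ∀ g : ℕ → E, Orthonormal ℂ g → ∃ j, ε < ‖S (g j)‖) {g : ℕ → E}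
    (hg : Orthonormal ℂ g) : ∃ j, ε < ‖u * V - S * u‖ + ‖V (g j)‖ := by
  have hug : Orthonormal ℂ (fun j ↦ u (g j)) := by
    rw [orthonormal_iff_ite] at hg ⊢
    simpa only [inner_map_map_of_mem_unitary hu] using hg
  obtain ⟨j, hj⟩ := hS _ hug
  refine ⟨j, hj.trans_le ?_⟩
  have hsplit : S (u (g j)) = u (V (g j)) - (u * V - S * u) (g j) := by simp
  calc ‖S (u (g j))‖ ≤ ‖u (V (g j))‖ + ‖(u * V - S * u) (g j)‖ := by
        rw [hsplit]; exact norm_sub_le _ _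
    _ ≤ ‖V (g j)‖ + ‖u * V - S * u‖ := by
        rw [norm_map_of_mem_unitary hu]
        gcongr
        simpa [hg.1 j] using (u * V - S * u).le_opNorm (g j)
    _ = ‖u * V - S * u‖ + ‖V (g j)‖ := add_comm _ _

lemma IsUnit.isClosed_range_and_finiteDimensional_ker {T : E →L[ℂ] E} (hT : IsUnit T) :
    IsClosed (Set.range T) ∧ FiniteDimensional ℂ T.ker ∧ FiniteDimensional ℂ (adjoint T).ker := by
  have hbij := isUnit_iff_bijective.mp hT
  have hbij' := isUnit_iff_bijective.mp (star_eq_adjoint T ▸ hT.star)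
  refine ⟨hbij.2.range_eq ▸ isClosed_univ, ?_, ?_⟩
  · rw [LinearMap.ker_eq_bot.mpr hbij.1]; infer_instance
  · rw [LinearMap.ker_eq_bot.mpr hbij'.1]; infer_instance

end Hilbert

section Ampliation

open scoped lp

variable {K : Type*} [NormedAddCommGroup K] [InnerProductSpace ℂ K]

/-- `B` acts on `ℓ²(ℕ, K) = ⨁ₙ K` as the infinite ampliation `A^(∞) = A ⊕ A ⊕ ⋯`. -/
def IsAmpliation (B : ℓ²(ℕ, K) →L[ℂ] ℓ²(ℕ, K)) (A : K →L[ℂ] K) : Prop :=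
  ∀ (f : ℓ²(ℕ, K)) (n : ℕ), (B f : ∀ _ : ℕ, K) n = A (f n)

lemma orthonormal_lp_single {x : K} (hx : ‖x‖ = 1) :
    Orthonormal ℂ (fun n ↦ lp.single 2 n x : ℕ → ℓ²(ℕ, K)) := by
  refine orthonormal_iff_ite.mpr fun i j ↦ ?_
  rw [lp.inner_single_left]
  rcases eq_or_ne i j with rfl | hij
  · simp [inner_self_eq_norm_sq_to_K, hx]
  · simp [hij]

namespace IsAmpliation

variable {A : K →L[ℂ] K} {B : ℓ²(ℕ, K) →L[ℂ] ℓ²(ℕ, K)}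

lemma sub_smul_one (hB : IsAmpliation B A) (μ : ℂ) :
    IsAmpliation (B - μ • 1) (A - μ • 1) := fun f n ↦ by
  simp only [sub_apply, smul_apply, lp.coeFn_sub, Pi.sub_apply, lp.coeFn_smul,
    Pi.smul_apply, hB f n, one_apply_eq_self]

lemma apply_single (hB : IsAmpliation B A) (n : ℕ) (x : K) :
    B (lp.single 2 n x) = lp.single 2 n (A x) := by
  ext m
  rw [hB]
  rcases eq_or_ne m n with rfl | hmn
  · simp only [lp.single_apply_self]
  · rw [lp.single_apply_ne _ _ _ hmn, lp.single_apply_ne _ _ _ hmn, map_zero]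

lemma adjoint_apply_single [CompleteSpace K] (hB : IsAmpliation B A) (n : ℕ) (y : K) :
    adjoint B (lp.single 2 n y) = lp.single 2 n (adjoint A y) := by
  refine ext_inner_right ℂ fun f ↦ ?_
  rw [adjoint_inner_left, lp.inner_single_left, lp.inner_single_left, adjoint_inner_left, hB]

lemma isUnit [CompleteSpace K] (hB : IsAmpliation B A) (hA : IsUnit A) : IsUnit B := by
  set e := ContinuousLinearEquiv.unitsEquiv ℂ K hA.unit
  rw [isUnit_iff_bijective]
  refine ⟨fun f g hfg ↦ lp.ext (funext fun n ↦ e.injective ?_), fun h ↦ ?_⟩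
  · have := congr(($hfg : ∀ _ : ℕ, K) n)
    rwa [hB, hB] at this
  · have hmem : Memℓp (fun n ↦ e.symm (h n)) 2 :=
      (lp.memℓp h).norm.const_mul ‖(e.symm : K →L[ℂ] K)‖ |>.mono fun n ↦
        (e.symm : K →L[ℂ] K).le_opNorm (h n)
    exact ⟨⟨_, hmem⟩, lp.ext (funext fun n ↦ by rw [hB]; exact e.apply_symm_apply (h n))⟩

theorem isUnit_of_tendsto_norm_mul_sub_mul [CompleteSpace K] {T : K →L[ℂ] K}
    {V S : ℓ²(ℕ, K) →L[ℂ] ℓ²(ℕ, K)} (hV : IsAmpliation V T) {U : ℕ → ℓ²(ℕ, K) →L[ℂ] ℓ²(ℕ, K)}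
    (hU : ∀ n, U n ∈ unitary (ℓ²(ℕ, K) →L[ℂ] ℓ²(ℕ, K)))
    (h : Tendsto (fun n ↦ ‖U n * V - S * U n‖) atTop (𝓝 0)) (hS : IsClosed (Set.range S))
    [FiniteDimensional ℂ S.ker] [FiniteDimensional ℂ (adjoint S).ker] : IsUnit T := by
  by_contra hT
  rcases exists_norm_apply_le_or_exists_adjoint_apply_eq_zero hT with happrox | ⟨y, hy, hTy⟩
  · obtain ⟨ε, hε, hSε⟩ := exists_pos_forall_orthonormal_exists_lt_norm_apply
      (exists_pos_mul_norm_le_of_isClosed_range hS)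
    obtain ⟨x, hx, hTx⟩ := happrox (ε / 2) (by positivity)
    obtain ⟨n, hn⟩ := (h.eventually (gt_mem_nhds (half_pos hε))).exists
    obtain ⟨j, hj⟩ :=
      exists_lt_norm_sub_add_norm_apply_of_mem_unitary (hU n) hSε (orthonormal_lp_single hx)
    rw [hV.apply_single, lp.norm_single (by norm_num)] at hj
    linarith
  · obtain ⟨ε, hε, hSε⟩ := exists_pos_forall_orthonormal_exists_lt_norm_apply
      (exists_pos_mul_norm_le_adjoint_of_isClosed_range hS)
    obtain ⟨n, hn⟩ := (h.eventually (gt_mem_nhds hε)).exists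
    obtain ⟨j, hj⟩ := exists_lt_norm_sub_add_norm_apply_of_mem_unitary (V := adjoint V) (hU n)
      hSε (orthonormal_lp_single hy)
    rw [hV.adjoint_apply_single, hTy, lp.single_zero, norm_zero, add_zero, ← star_eq_adjoint,
      ← star_eq_adjoint, norm_mul_star_sub_star_mul_of_mem_unitary (hU n)] at hj
    linarith

end IsAmpliation

end Ampliation

theorem stmt_18_general {K : Type*} [NormedAddCommGroup K] [InnerProductSpace ℂ K] [CompleteSpace K]
    (A : K →L[ℂ] K)
    (B : lp (fun _ : ℕ => K) 2 →L[ℂ] lp (fun _ : ℕ => K) 2)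
    (hB : ∀ (f : lp (fun _ : ℕ => K) 2) (n : ℕ), (B f : ∀ _ : ℕ, K) n = A (f n)) :
    (∀ lam : ℂ,
      (IsClosed (Set.range (B - lam • (1 : lp (fun _ : ℕ => K) 2 →L[ℂ] lp (fun _ : ℕ => K) 2))) ∧
        FiniteDimensional ℂ (LinearMap.ker
          (↑(B - lam • (1 : lp (fun _ : ℕ => K) 2 →L[ℂ] lp (fun _ : ℕ => K) 2)) :
            lp (fun _ : ℕ => K) 2 →ₗ[ℂ] lp (fun _ : ℕ => K) 2)) ∧
        FiniteDimensional ℂ (LinearMap.ker ((ContinuousLinearMap.adjoint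
          (B - lam • (1 : lp (fun _ : ℕ => K) 2 →L[ℂ] lp (fun _ : ℕ => K) 2))) :
            lp (fun _ : ℕ => K) 2 →ₗ[ℂ] lp (fun _ : ℕ => K) 2)) ∧
        Module.finrank ℂ (LinearMap.ker
            (↑(B - lam • (1 : lp (fun _ : ℕ => K) 2 →L[ℂ] lp (fun _ : ℕ => K) 2)) :
              lp (fun _ : ℕ => K) 2 →ₗ[ℂ] lp (fun _ : ℕ => K) 2)) =
          Module.finrank ℂ (LinearMap.ker ((ContinuousLinearMap.adjoint
            (B - lam • (1 : lp (fun _ : ℕ => K) 2 →L[ℂ] lp (fun _ : ℕ => K) 2))) :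
              lp (fun _ : ℕ => K) 2 →ₗ[ℂ] lp (fun _ : ℕ => K) 2))) →
      IsUnit (A - lam • (1 : K →L[ℂ] K)) ∧
        IsUnit (B - lam • (1 : lp (fun _ : ℕ => K) 2 →L[ℂ] lp (fun _ : ℕ => K) 2))) ∧
    (∀ R : lp (fun _ : ℕ => K) 2 →L[ℂ] lp (fun _ : ℕ => K) 2,
      (∃ U : ℕ → (lp (fun _ : ℕ => K) 2 →L[ℂ] lp (fun _ : ℕ => K) 2),
        (∀ n, U n ∈ unitary (lp (fun _ : ℕ => K) 2 →L[ℂ] lp (fun _ : ℕ => K) 2)) ∧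
        Filter.Tendsto (fun n => ‖U n * B - R * U n‖) Filter.atTop (nhds 0)) →
      spectrum ℂ R =
        {mu : ℂ | ¬ (IsClosed (Set.range
            (R - mu • (1 : lp (fun _ : ℕ => K) 2 →L[ℂ] lp (fun _ : ℕ => K) 2))) ∧
          FiniteDimensional ℂ (LinearMap.ker
            (↑(R - mu • (1 : lp (fun _ : ℕ => K) 2 →L[ℂ] lp (fun _ : ℕ => K) 2)) :
              lp (fun _ : ℕ => K) 2 →ₗ[ℂ] lp (fun _ : ℕ => K) 2)) ∧
          FiniteDimensional ℂ (LinearMap.ker ((ContinuousLinearMap.adjoint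
            (R - mu • (1 : lp (fun _ : ℕ => K) 2 →L[ℂ] lp (fun _ : ℕ => K) 2))) :
              lp (fun _ : ℕ => K) 2 →ₗ[ℂ] lp (fun _ : ℕ => K) 2)))}) := by
  have hB' : IsAmpliation B A := hB
  refine ⟨fun lam ⟨hcl, hker, hcoker, _⟩ ↦ ?_, fun R ⟨U, hU, hUBR⟩ ↦ ?_⟩
  · have hA := (hB'.sub_smul_one lam).isUnit_of_tendsto_norm_mul_sub_mul (U := 1)
      (fun _ ↦ one_mem _) (by simp) hcl
    exact ⟨hA, (hB'.sub_smul_one lam).isUnit hA⟩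
  · have hshift (μ : ℂ) :
        Tendsto (fun n ↦ ‖U n * (B - μ • 1) - (R - μ • 1) * U n‖) atTop (𝓝 0) := by
      simpa only [mul_sub, sub_mul, mul_smul_comm, smul_mul_assoc, mul_one, one_mul,
        sub_sub_sub_cancel_right] using hUBR
    ext μ
    rw [Set.mem_ofPred_eq, spectrum.mem_iff, Algebra.algebraMap_eq_smul_one, ← neg_sub,
      IsUnit.neg_iff]
    refine not_congr ⟨IsUnit.isClosed_range_and_finiteDimensional_ker,
      fun ⟨hcl, hker, hcoker⟩ ↦ ?_⟩
    have hA := (hB'.sub_smul_one μ).isUnit_of_tendsto_norm_mul_sub_mul hU (hshift μ) hcl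
    exact IsUnit.of_tendsto_norm_mul_sub_mul hU (hshift μ) ((hB'.sub_smul_one μ).isUnit hA)

theorem stmt_18 {K : Type*} [NormedAddCommGroup K] [InnerProductSpace ℂ K] [CompleteSpace K]
    (A : K →L[ℂ] K)
    (hA : ∀ X ∈ StarAlgebra.adjoin ℂ {A}, IsCompactOperator ⇑X → X = 0)
    (B : lp (fun _ : ℕ => K) 2 →L[ℂ] lp (fun _ : ℕ => K) 2)
    (hB : ∀ (f : lp (fun _ : ℕ => K) 2) (n : ℕ), (B f : ∀ _ : ℕ, K) n = A (f n)) :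
    (∀ lam : ℂ,
      (IsClosed (Set.range (B - lam • (1 : lp (fun _ : ℕ => K) 2 →L[ℂ] lp (fun _ : ℕ => K) 2))) ∧
        FiniteDimensional ℂ (LinearMap.ker
          (↑(B - lam • (1 : lp (fun _ : ℕ => K) 2 →L[ℂ] lp (fun _ : ℕ => K) 2)) :
            lp (fun _ : ℕ => K) 2 →ₗ[ℂ] lp (fun _ : ℕ => K) 2)) ∧
        FiniteDimensional ℂ (LinearMap.ker ((ContinuousLinearMap.adjoint
          (B - lam • (1 : lp (fun _ : ℕ => K) 2 →L[ℂ] lp (fun _ : ℕ => K) 2))) :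
            lp (fun _ : ℕ => K) 2 →ₗ[ℂ] lp (fun _ : ℕ => K) 2)) ∧
        Module.finrank ℂ (LinearMap.ker
            (↑(B - lam • (1 : lp (fun _ : ℕ => K) 2 →L[ℂ] lp (fun _ : ℕ => K) 2)) :
              lp (fun _ : ℕ => K) 2 →ₗ[ℂ] lp (fun _ : ℕ => K) 2)) =
          Module.finrank ℂ (LinearMap.ker ((ContinuousLinearMap.adjoint
            (B - lam • (1 : lp (fun _ : ℕ => K) 2 →L[ℂ] lp (fun _ : ℕ => K) 2))) :
              lp (fun _ : ℕ => K) 2 →ₗ[ℂ] lp (fun _ : ℕ => K) 2))) →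
      IsUnit (A - lam • (1 : K →L[ℂ] K)) ∧
        IsUnit (B - lam • (1 : lp (fun _ : ℕ => K) 2 →L[ℂ] lp (fun _ : ℕ => K) 2))) ∧
    (∀ R : lp (fun _ : ℕ => K) 2 →L[ℂ] lp (fun _ : ℕ => K) 2,
      (∃ U : ℕ → (lp (fun _ : ℕ => K) 2 →L[ℂ] lp (fun _ : ℕ => K) 2),
        (∀ n, U n ∈ unitary (lp (fun _ : ℕ => K) 2 →L[ℂ] lp (fun _ : ℕ => K) 2)) ∧
        Filter.Tendsto (fun n => ‖U n * B - R * U n‖) Filter.atTop (nhds 0)) →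
      spectrum ℂ R =
        {mu : ℂ | ¬ (IsClosed (Set.range
            (R - mu • (1 : lp (fun _ : ℕ => K) 2 →L[ℂ] lp (fun _ : ℕ => K) 2))) ∧
          FiniteDimensional ℂ (LinearMap.ker
            (↑(R - mu • (1 : lp (fun _ : ℕ => K) 2 →L[ℂ] lp (fun _ : ℕ => K) 2)) :
              lp (fun _ : ℕ => K) 2 →ₗ[ℂ] lp (fun _ : ℕ => K) 2)) ∧
          FiniteDimensional ℂ (LinearMap.ker ((ContinuousLinearMap.adjoint
            (R - mu • (1 : lp (fun _ : ℕ => K) 2 →L[ℂ] lp (fun _ : ℕ => K) 2))) :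
              lp (fun _ : ℕ => K) 2 →ₗ[ℂ] lp (fun _ : ℕ => K) 2)))}) :=
  stmt_18_general A B hB
end
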